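/- LGV corollary for compatible endpoints: Let D be an acyclic digraph with weighted edges, u = (u₁,…,u_n) and v = (v₁,…,v_n) n-tuples of vertices such that u is D-compatible with v, meaning every path from u_i to v_l intersects every path from u_j to v_k whenever i < j and k < l. Then the sum of weights of non-intersecting n-tuples of paths from u to v equals det[h(u_i, v_j)]_{1≤i,j≤n}, where h(u,v) is the weighted path count from u to v. -/

import Mathlib

open Finset

/-- `p` is a directed path in the digraph with edge relation `E` from `u` to `v`,
recorded as its (nonempty) list of vertices. -/
def IsPathFrom {V : Type*} (E : V → V → Prop) (u v : V) (p : List V) : Prop :=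
  p.Chain' E ∧ p.head? = some u ∧ p.getLast? = some v

/-- The weight of a path: the product of the weights of its edges. -/
def pathWeight {V R : Type*} [CommRing R] (w : V → V → R) (p : List V) : R :=
  (List.zipWith w p p.tail).prod

/-- `h(u,v)`: the generating function of all paths from `u` to `v`. -/
noncomputable def pathGF {V R : Type*} [CommRing R] (E : V → V → Prop) (w : V → V → R)
    (u v : V) : R :=
  ∑ᶠ p ∈ {p : List V | IsPathFrom E u v p}, pathWeight w p

/-- An `n`-tuple of paths is non-intersecting if no two distinct component paths
share a vertex. -/
def NonIntersecting {V : Type*} {n : ℕ} (P : Fin n → List V) : Prop :=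
  ∀ i j : Fin n, i ≠ j → ∀ x, x ∈ P i → x ∉ P j

/-- `F₀(u,v)`: the generating function of non-intersecting `n`-paths from `u` to `v`. -/
noncomputable def nonIntGF {V R : Type*} [CommRing R] (E : V → V → Prop) (w : V → V → R)
    (n : ℕ) (u v : Fin n → V) : R :=
  ∑ᶠ P : {P : Fin n → List V //
      (∀ i, IsPathFrom E (u i) (v i) (P i)) ∧ NonIntersecting P},
    ∏ i, pathWeight w (P.1 i)

/-
Expanding the determinant gives the signed sum of all pairs `(σ, P)` with `P i` a path from
`u i` to `v (σ i)`. The pairs with intersecting `P` cancel: let `i` be the least index whose path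
meets another one, `x` the first vertex of `P i` lying on another path, and `j` the least other
index with `x ∈ P j`. Exchanging the tails of `P i` and `P j` after `x` multiplies `σ` by the
transposition `(i j)` and keeps the weight; since paths in an acyclic digraph do not repeat
vertices, the new family yields the same `(i, x, j)`, so this is a sign-reversing involution.
Hence `det [h(u i, v j)] = ∑ σ, sign σ • F₀(u, v ∘ σ)`. For compatible endpoints a non-intersecting
family `u → v ∘ σ` forces `σ` to be increasing, i.e. the identity.
-/

section

variable {V R : Type*}

theorem isPathFrom_iff {E : V → V → Prop} {a b : V} {p : List V} :
    IsPathFrom E a b p ↔ p.IsChain E ∧ p.head? = some a ∧ p.getLast? = some b :=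
  Iff.rfl

theorem isPathFrom_append_cons_iff {E : V → V → Prop} {a b x : V} {s t : List V} :
    IsPathFrom E a b (s ++ x :: t) ↔ IsPathFrom E a x (s ++ [x]) ∧ IsPathFrom E x b (x :: t) := by
  rw [isPathFrom_iff, isPathFrom_iff, isPathFrom_iff, List.isChain_split]
  cases s <;> simp [List.getLast?_cons] <;> tauto

theorem IsPathFrom.nodup {E : V → V → Prop}
    (hacyclic : ∀ x : V, ∀ p : List V, IsPathFrom E x x p → p.length ≤ 1)
    {a b : V} {p : List V} (hp : IsPathFrom E a b p) : p.Nodup := by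
  induction p generalizing a with
  | nil => simp
  | cons c p ih =>
    obtain rfl : c = a := by simpa using hp.2.1
    refine List.nodup_cons.2 ⟨fun hc => ?_, ?_⟩
    · obtain ⟨m, t, rfl⟩ := List.mem_iff_append.1 hc
      have hcycle := (isPathFrom_append_cons_iff (s := c :: m)).1 hp |>.1
      simpa using hacyclic c _ hcycle
    · cases p with
      | nil => simp
      | cons d p => exact ih (isPathFrom_append_cons_iff (s := [c]) |>.1 hp).2

theorem pathWeight_cons_cons [CommRing R] (w : V → V → R) (a b : V) (l : List V) :
    pathWeight w (a :: b :: l) = w a b * pathWeight w (b :: l) := by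
  simp [pathWeight]

theorem pathWeight_append_cons [CommRing R] (w : V → V → R) (s t : List V) (x : V) :
    pathWeight w (s ++ x :: t) = pathWeight w (s ++ [x]) * pathWeight w (x :: t) := by
  induction s with
  | nil => simp [pathWeight]
  | cons a s ih =>
    cases s with
    | nil => simp [pathWeight]
    | cons b s =>
      simp only [List.cons_append, pathWeight_cons_cons] at ih ⊢
      rw [ih, mul_assoc]

theorem pathWeight_append [CommRing R] (w : V → V → R) (s t : List V) :
    pathWeight w (s ++ t) = pathWeight w (s ++ t.take 1) * pathWeight w t := by
  cases t with
  | nil => simp [pathWeight]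
  | cons x t => simpa using pathWeight_append_cons w s t x

section ExchangeTails

variable [DecidableEq V]

theorem List.dropWhile_ne_eq_cons_of_mem {x : V} {l : List V} (hx : x ∈ l) :
    ∃ t, l.dropWhile (· ≠ x) = x :: t := by
  induction l with
  | nil => simp at hx
  | cons a l ih =>
    by_cases hax : a = x
    · exact ⟨l, by simp [hax]⟩
    · simpa [hax] using ih (by simpa [Ne.symm hax] using hx)

theorem List.takeWhile_ne_append_cons {x : V} {s : List V} (hx : x ∉ s) (t : List V) :
    (s ++ x :: t).takeWhile (· ≠ x) = s := by
  rw [List.takeWhile_append_of_pos fun a ha => by simpa using ne_of_mem_of_not_mem ha hx]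
  simp

theorem List.takeWhile_ne_dropWhile_ne (x : V) (l : List V) :
    (l.dropWhile (· ≠ x)).takeWhile (· ≠ x) = [] := by
  by_cases hx : x ∈ l
  · obtain ⟨t, ht⟩ := List.dropWhile_ne_eq_cons_of_mem hx
    rw [ht]
    simp
  · rw [List.dropWhile_eq_nil_iff.2 fun a ha => by simpa using ne_of_mem_of_not_mem ha hx]
    rfl

theorem List.dropWhile_ne_append_cons {x : V} {s : List V} (hx : x ∉ s) (t : List V) :
    (s ++ x :: t).dropWhile (· ≠ x) = x :: t := by
  rw [List.dropWhile_append_of_pos fun a ha => by simpa using ne_of_mem_of_not_mem ha hx]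
  simp

variable {ι : Type*}

def exchangeTails (P : ι → List V) (τ : Equiv.Perm ι) (x : V) (m : ι) : List V :=
  (P m).takeWhile (· ≠ x) ++ (P (τ m)).dropWhile (· ≠ x)

variable {P : ι → List V} {τ : Equiv.Perm ι} {x : V}

theorem exchangeTails_of_apply_eq {m : ι} (hm : τ m = m) : exchangeTails P τ x m = P m := by
  simp [exchangeTails, hm]

theorem exchangeTails_one : exchangeTails P 1 x = P :=
  funext fun _ => exchangeTails_of_apply_eq rfl

theorem exchangeTails_exchangeTails (τ' : Equiv.Perm ι) :
    exchangeTails (exchangeTails P τ x) τ' x = exchangeTails P (τ * τ') x := by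
  funext m
  simp only [exchangeTails, Equiv.Perm.mul_apply]
  rw [List.takeWhile_append_of_pos (List.all_eq_true.1 List.all_takeWhile),
    List.dropWhile_append_of_pos (List.all_eq_true.1 List.all_takeWhile),
    List.takeWhile_ne_dropWhile_ne, List.append_nil, List.dropWhile_idempotent]

theorem mem_of_mem_exchangeTails {m : ι} {y : V} (hy : y ∈ exchangeTails P τ x m) :
    y ∈ P m ∨ y ∈ (P (τ m)).dropWhile (· ≠ x) :=
  (List.mem_append.1 hy).imp_left fun h => List.takeWhile_subset _ h

theorem mem_exchangeTails_self {m : ι} (hx : x ∈ P (τ m)) : x ∈ exchangeTails P τ x m := by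
  obtain ⟨t, ht⟩ := List.dropWhile_ne_eq_cons_of_mem hx
  rw [exchangeTails, ht]
  simp

theorem IsPathFrom.takeWhile_append_dropWhile {E : V → V → Prop} {a b c d : V} {p q : List V}
    (hp : IsPathFrom E a b p) (hq : IsPathFrom E c d q) (hxp : x ∈ p) (hxq : x ∈ q) :
    IsPathFrom E a d (p.takeWhile (· ≠ x) ++ q.dropWhile (· ≠ x)) := by
  obtain ⟨s, hs⟩ := List.dropWhile_ne_eq_cons_of_mem hxp
  obtain ⟨t, ht⟩ := List.dropWhile_ne_eq_cons_of_mem hxq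
  rw [← List.takeWhile_append_dropWhile (p := (· ≠ x)) (l := p), hs,
    isPathFrom_append_cons_iff] at hp
  rw [← List.takeWhile_append_dropWhile (p := (· ≠ x)) (l := q), ht,
    isPathFrom_append_cons_iff] at hq
  rw [ht, isPathFrom_append_cons_iff]
  exact ⟨hp.1, hq.2⟩

theorem isPathFrom_exchangeTails {E : V → V → Prop} {a b : ι → V}
    (hP : ∀ m, IsPathFrom E (a m) (b m) (P m)) (hx : ∀ m, τ m ≠ m → x ∈ P m) (m : ι) :
    IsPathFrom E (a m) (b (τ m)) (exchangeTails P τ x m) := by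
  by_cases hm : τ m = m
  · rw [exchangeTails_of_apply_eq hm, hm]
    exact hP m
  · exact (hP m).takeWhile_append_dropWhile (hP (τ m)) (hx m hm)
      (hx (τ m) (fun h => hm (τ.injective h)))

theorem prod_pathWeight_exchangeTails [Fintype ι] [CommRing R] (w : V → V → R)
    (hx : ∀ m, τ m ≠ m → x ∈ P m) :
    ∏ m, pathWeight w (exchangeTails P τ x m) = ∏ m, pathWeight w (P m) := by
  set before : ι → R := fun m =>
    pathWeight w ((P m).takeWhile (· ≠ x) ++ ((P m).dropWhile (· ≠ x)).take 1)
  set after : ι → R := fun m => pathWeight w ((P m).dropWhile (· ≠ x))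
  -- `take 1` keeps the junction vertex `x` in `before` when `x ∈ P m`, and is `[]` otherwise
  have hP : ∀ m, pathWeight w (P m) = before m * after m := fun m => by
    rw [← pathWeight_append, List.takeWhile_append_dropWhile]
  have hsplit : ∀ m, pathWeight w (exchangeTails P τ x m) = before m * after (τ m) := by
    intro m
    by_cases hm : τ m = m
    · rw [exchangeTails_of_apply_eq hm, hm, hP]
    · obtain ⟨s, hs⟩ := List.dropWhile_ne_eq_cons_of_mem (hx m hm)
      obtain ⟨t, ht⟩ := List.dropWhile_ne_eq_cons_of_mem (hx (τ m) (fun h => hm (τ.injective h)))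
      simp only [exchangeTails, before, after, hs, ht]
      exact pathWeight_append w _ _ |>.trans (by simp)
  calc ∏ m, pathWeight w (exchangeTails P τ x m) = (∏ m, before m) * ∏ m, after (τ m) := by
        rw [← Finset.prod_mul_distrib]; exact Finset.prod_congr rfl fun m _ => hsplit m
    _ = ∏ m, pathWeight w (P m) := by
        rw [Equiv.prod_comp, ← Finset.prod_mul_distrib]
        exact Finset.prod_congr rfl fun m _ => (hP m).symm

end ExchangeTails

open Classical

section FirstCrossing

variable {n : ℕ} (P : Fin n → List V)

def IsShared (i : Fin n) (y : V) : Prop := ∃ j ≠ i, y ∈ P j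

variable {P} in
theorem IsShared.of_exchangeTails [DecidableEq V] {τ : Equiv.Perm (Fin n)} {x y : V} {m : Fin n}
    (hy : IsShared (exchangeTails P τ x) m y) (hm : τ m = m) : IsShared P m y := by
  obtain ⟨m', hm', hy⟩ := hy
  rcases mem_of_mem_exchangeTails hy with hy | hy
  · exact ⟨m', hm', hy⟩
  · exact ⟨τ m', fun h => hm' (τ.injective (h.trans hm.symm)), List.dropWhile_subset _ hy⟩

theorem exists_isShared_of_not_nonIntersecting (h : ¬NonIntersecting P) :
    ∃ i, ∃ y ∈ P i, IsShared P i y := by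
  simp only [NonIntersecting, not_forall, not_not] at h
  obtain ⟨i, j, hij, y, hi, hj⟩ := h
  exact ⟨i, y, hi, j, Ne.symm hij, hj⟩

noncomputable def crossIdx (h : ¬NonIntersecting P) : Fin n :=
  Fin.find (fun i => ∃ y ∈ P i, IsShared P i y) (exists_isShared_of_not_nonIntersecting P h)

variable (h : ¬NonIntersecting P)

theorem exists_isShared_crossIdx : ∃ y ∈ P (crossIdx P h), IsShared P (crossIdx P h) y :=
  Fin.find_spec (p := fun i => ∃ y ∈ P i, IsShared P i y) _

theorem not_isShared_of_lt_crossIdx {m : Fin n} (hm : m < crossIdx P h) {y : V} (hy : y ∈ P m) :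
    ¬IsShared P m y :=
  fun hsh => Fin.find_min _ hm ⟨y, hy, hsh⟩

noncomputable def crossVertex : V :=
  ((P (crossIdx P h)).find? (IsShared P (crossIdx P h) ·)).get
    (List.find?_isSome.2 (by simpa using exists_isShared_crossIdx P h))

theorem crossVertex_spec : IsShared P (crossIdx P h) (crossVertex P h) ∧
    ∃ s t, P (crossIdx P h) = s ++ crossVertex P h :: t ∧
      ∀ a ∈ s, ¬IsShared P (crossIdx P h) a := by
  have hfind := (Option.some_get _).symm.trans (congrArg some (rfl : _ = crossVertex P h))
  simpa using List.find?_eq_some_iff_append.1 hfind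

theorem crossVertex_mem : crossVertex P h ∈ P (crossIdx P h) := by
  obtain ⟨-, s, t, hst, -⟩ := crossVertex_spec P h
  simp [hst]

noncomputable def crossPartner : Fin n :=
  Fin.find (fun j => j ≠ crossIdx P h ∧ crossVertex P h ∈ P j)
    (by simpa [IsShared] using (crossVertex_spec P h).1)

theorem crossPartner_ne : crossPartner P h ≠ crossIdx P h :=
  (Fin.find_spec (p := fun j => j ≠ crossIdx P h ∧ crossVertex P h ∈ P j) _).1

theorem crossVertex_mem_crossPartner : crossVertex P h ∈ P (crossPartner P h) :=
  (Fin.find_spec (p := fun j => j ≠ crossIdx P h ∧ crossVertex P h ∈ P j) _).2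

theorem crossIdx_lt_crossPartner : crossIdx P h < crossPartner P h := by
  refine lt_of_le_of_ne (not_lt.1 fun hlt => ?_) (crossPartner_ne P h).symm
  exact not_isShared_of_lt_crossIdx P h hlt (crossVertex_mem_crossPartner P h)
    ⟨crossIdx P h, (crossPartner_ne P h).symm, crossVertex_mem P h⟩

theorem crossVertex_mem_of_swap_apply_ne {m : Fin n}
    (hm : Equiv.swap (crossIdx P h) (crossPartner P h) m ≠ m) : crossVertex P h ∈ P m := by
  by_cases hmi : m = crossIdx P h
  · exact hmi ▸ crossVertex_mem P h
  by_cases hmj : m = crossPartner P h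
  · exact hmj ▸ crossVertex_mem_crossPartner P h
  exact absurd (Equiv.swap_apply_of_ne_of_ne hmi hmj) hm

end FirstCrossing

section SwitchAtCrossing

variable {n : ℕ} {P : Fin n → List V} (h : ¬NonIntersecting P)

variable (P) in
noncomputable def switchAtCrossing : Fin n → List V :=
  exchangeTails P (Equiv.swap (crossIdx P h) (crossPartner P h)) (crossVertex P h)

theorem crossVertex_mem_switchAtCrossing_crossIdx :
    crossVertex P h ∈ switchAtCrossing P h (crossIdx P h) :=
  mem_exchangeTails_self (by simpa using crossVertex_mem_crossPartner P h)

theorem crossVertex_mem_switchAtCrossing_crossPartner :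
    crossVertex P h ∈ switchAtCrossing P h (crossPartner P h) :=
  mem_exchangeTails_self (by simpa using crossVertex_mem P h)

theorem not_nonIntersecting_switchAtCrossing : ¬NonIntersecting (switchAtCrossing P h) :=
  fun hNI => hNI _ _ (crossPartner_ne P h).symm _ (crossVertex_mem_switchAtCrossing_crossIdx h)
    (crossVertex_mem_switchAtCrossing_crossPartner h)

variable (h' : ¬NonIntersecting (switchAtCrossing P h))

theorem crossIdx_switchAtCrossing : crossIdx (switchAtCrossing P h) h' = crossIdx P h := by
  rw [crossIdx, Fin.find_eq_iff]
  refine ⟨⟨_, crossVertex_mem_switchAtCrossing_crossIdx h, _, crossPartner_ne P h,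
    crossVertex_mem_switchAtCrossing_crossPartner h⟩, fun m hm ⟨y, hy, hsh⟩ => ?_⟩
  have hfix : Equiv.swap (crossIdx P h) (crossPartner P h) m = m :=
    Equiv.swap_apply_of_ne_of_ne hm.ne (hm.trans (crossIdx_lt_crossPartner P h)).ne
  rw [switchAtCrossing, exchangeTails_of_apply_eq hfix] at hy
  exact not_isShared_of_lt_crossIdx P h hm hy (hsh.of_exchangeTails hfix)

theorem crossVertex_switchAtCrossing (hnd : ∀ m, (P m).Nodup) :
    crossVertex (switchAtCrossing P h) h' = crossVertex P h := by
  set i := crossIdx P h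
  set x := crossVertex P h
  set τ := Equiv.swap i (crossPartner P h)
  obtain ⟨hx, s, t, hPi, hs⟩ := crossVertex_spec P h
  have hxs : x ∉ s := fun hxs => hs x hxs hx
  obtain ⟨t', ht'⟩ := List.dropWhile_ne_eq_cons_of_mem (crossVertex_mem_crossPartner P h)
  have hQi : switchAtCrossing P h i = s ++ x :: t' := by
    rw [switchAtCrossing, exchangeTails, Equiv.swap_apply_left, ht', hPi,
      List.takeWhile_ne_append_cons hxs]
  apply Option.get_of_eq_some
  rw [crossIdx_switchAtCrossing, List.find?_eq_some_iff_append]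
  refine ⟨by simpa using ⟨_, crossPartner_ne P h, crossVertex_mem_switchAtCrossing_crossPartner h⟩,
    s, t', hQi, fun a ha => ?_⟩
  simp only [Bool.not_eq_eq_eq_not, Bool.not_true, decide_eq_false_iff_not]
  rintro ⟨m, hmi, ham⟩
  rcases mem_of_mem_exchangeTails ham with ha' | ha'
  · exact hs a ha ⟨m, hmi, ha'⟩
  by_cases hm : τ m = i
  · -- `a` would occur in `P i` both before and after `x`
    rw [hm, hPi, List.dropWhile_ne_append_cons hxs] at ha'
    exact List.disjoint_of_nodup_append (hPi ▸ hnd i) ha ha'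
  · exact hs a ha ⟨τ m, hm, List.dropWhile_subset _ ha'⟩

theorem crossPartner_switchAtCrossing (hnd : ∀ m, (P m).Nodup) :
    crossPartner (switchAtCrossing P h) h' = crossPartner P h := by
  refine Fin.find_congr' fun {m} => ?_
  rw [crossIdx_switchAtCrossing, crossVertex_switchAtCrossing h h' hnd]
  by_cases hmj : m = crossPartner P h
  · subst hmj
    simp only [crossVertex_mem_switchAtCrossing_crossPartner, crossVertex_mem_crossPartner]
  refine and_congr_right fun hmi => ?_
  rw [switchAtCrossing, exchangeTails_of_apply_eq (Equiv.swap_apply_of_ne_of_ne hmi hmj)]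

theorem switchAtCrossing_switchAtCrossing (hnd : ∀ m, (P m).Nodup) :
    switchAtCrossing (switchAtCrossing P h) h' = P := by
  rw [switchAtCrossing.eq_1 (switchAtCrossing P h) h', crossIdx_switchAtCrossing,
    crossPartner_switchAtCrossing h h' hnd, crossVertex_switchAtCrossing h h' hnd, switchAtCrossing,
    exchangeTails_exchangeTails, Equiv.swap_mul_self, exchangeTails_one]

end SwitchAtCrossing

section Sums

variable [CommRing R] {E : V → V → Prop} (w : V → V → R)
  (hfin : ∀ a b : V, {p : List V | IsPathFrom E a b p}.Finite) {n : ℕ}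

theorem pathGF_eq_sum (a b : V) :
    pathGF E w a b = ∑ p ∈ (hfin a b).toFinset, pathWeight w p := by
  rw [pathGF, ← finsum_mem_coe_finset, Set.Finite.coe_toFinset]

noncomputable def pathSystems (u v : Fin n → V) : Finset (Fin n → List V) :=
  Fintype.piFinset fun i => (hfin (u i) (v i)).toFinset

omit [CommRing R] in
theorem mem_pathSystems {u v : Fin n → V} {P : Fin n → List V} :
    P ∈ pathSystems hfin u v ↔ ∀ i, IsPathFrom E (u i) (v i) (P i) := by
  simp [pathSystems]

theorem det_pathGF_eq_sum (u v : Fin n → V) :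
    (Matrix.of fun i j => pathGF E w (u i) (v j)).det = ∑ σ : Equiv.Perm (Fin n),
      Equiv.Perm.sign σ • ∑ P ∈ pathSystems hfin u (v ∘ σ), ∏ i, pathWeight w (P i) := by
  rw [← Matrix.det_transpose, Matrix.det_apply]
  refine Finset.sum_congr rfl fun σ _ => ?_
  simp only [Matrix.transpose_apply, Matrix.of_apply, pathGF_eq_sum w hfin, Finset.prod_univ_sum]
  rfl

theorem nonIntGF_eq_sum (u v : Fin n → V) :
    nonIntGF E w n u v =
      ∑ P ∈ (pathSystems hfin u v).filter NonIntersecting, ∏ i, pathWeight w (P i) := by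
  rw [nonIntGF, ← finsum_mem_coe_finset,
    finsum_subtype_eq_finsum_cond (f := fun P : Fin n → List V => ∏ i, pathWeight w (P i))]
  simp only [Finset.coe_filter, mem_pathSystems, Set.mem_ofPred_eq]

noncomputable def intersectingSystems (u v : Fin n → V) :
    Finset (Σ _ : Equiv.Perm (Fin n), Fin n → List V) :=
  Finset.univ.sigma fun σ => (pathSystems hfin u (v ∘ σ)).filter (¬NonIntersecting ·)

theorem mem_intersectingSystems {u v : Fin n → V} {x : Σ _ : Equiv.Perm (Fin n), Fin n → List V} :
    x ∈ intersectingSystems hfin u v ↔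
      (∀ i, IsPathFrom E (u i) (v (x.1 i)) (x.2 i)) ∧ ¬NonIntersecting x.2 := by
  simp [intersectingSystems, mem_pathSystems]

theorem sum_intersectingSystems_eq_zero
    (hacyclic : ∀ x : V, ∀ p : List V, IsPathFrom E x x p → p.length ≤ 1) (u v : Fin n → V) :
    ∑ x ∈ intersectingSystems hfin u v, Equiv.Perm.sign x.1 • ∏ i, pathWeight w (x.2 i) = 0 := by
  refine Finset.sum_involution
    (fun x hx => have hb := (mem_intersectingSystems hfin).1 hx |>.2
      ⟨x.1 * Equiv.swap (crossIdx x.2 hb) (crossPartner x.2 hb), switchAtCrossing x.2 hb⟩)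
    (fun x hx => ?_) (fun x hx _ => ?_) (fun x hx => ?_) (fun x hx => ?_)
  all_goals obtain ⟨hpaths, hb⟩ := (mem_intersectingSystems hfin).1 hx
  · dsimp only
    rw [Equiv.Perm.sign_mul, Equiv.Perm.sign_swap (crossPartner_ne x.2 hb).symm, switchAtCrossing,
      prod_pathWeight_exchangeTails w fun _ => crossVertex_mem_of_swap_apply_ne x.2 hb]
    simp
  · intro heq
    have hswap := mul_eq_left.1 (congrArg Sigma.fst heq)
    exact crossPartner_ne x.2 hb (Equiv.swap_eq_one_iff.1 hswap).symm
  · exact (mem_intersectingSystems hfin).2 ⟨isPathFrom_exchangeTails hpaths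
      fun _ => crossVertex_mem_of_swap_apply_ne x.2 hb, not_nonIntersecting_switchAtCrossing hb⟩
  · have hnd : ∀ m, (x.2 m).Nodup := fun m => (hpaths m).nodup hacyclic
    dsimp only
    rw [crossIdx_switchAtCrossing, crossPartner_switchAtCrossing _ _ hnd,
      switchAtCrossing_switchAtCrossing _ _ hnd, mul_assoc, Equiv.swap_mul_self, mul_one]

end Sums

theorem lindstrom_gessel_viennot [CommRing R] {E : V → V → Prop} (w : V → V → R)
    (hacyclic : ∀ x : V, ∀ p : List V, IsPathFrom E x x p → p.length ≤ 1)
    (hfin : ∀ a b : V, {p : List V | IsPathFrom E a b p}.Finite) {n : ℕ} (u v : Fin n → V) :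
    (Matrix.of fun i j => pathGF E w (u i) (v j)).det =
      ∑ σ : Equiv.Perm (Fin n), Equiv.Perm.sign σ • nonIntGF E w n u (v ∘ σ) := by
  have hsplit : ∀ σ : Equiv.Perm (Fin n),
      ∑ P ∈ pathSystems hfin u (v ∘ σ), ∏ i, pathWeight w (P i) = nonIntGF E w n u (v ∘ σ) +
        ∑ P ∈ (pathSystems hfin u (v ∘ σ)).filter (¬NonIntersecting ·), ∏ i, pathWeight w (P i) :=
    fun σ => by rw [nonIntGF_eq_sum, Finset.sum_filter_add_sum_filter_not]
  simp only [det_pathGF_eq_sum w hfin, hsplit, smul_add, Finset.sum_add_distrib, Finset.smul_sum]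
  rw [Finset.sum_sigma', ← intersectingSystems, sum_intersectingSystems_eq_zero w hfin hacyclic,
    add_zero]

theorem eq_one_of_nonIntersecting {E : V → V → Prop} {n : ℕ} {u v : Fin n → V}
    (hcompat : ∀ i j k l : Fin n, i < j → k < l →
      ∀ p q : List V, IsPathFrom E (u i) (v l) p → IsPathFrom E (u j) (v k) q →
        ∃ x, x ∈ p ∧ x ∈ q)
    {σ : Equiv.Perm (Fin n)} {P : Fin n → List V} (hP : ∀ i, IsPathFrom E (u i) (v (σ i)) (P i))
    (hNI : NonIntersecting P) : σ = 1 := by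
  have hmono : StrictMono σ := fun i j hij => not_le.1 fun hle => by
    obtain ⟨x, hxi, hxj⟩ := hcompat i j (σ j) (σ i) hij
      (hle.lt_of_ne fun h => hij.ne (σ.injective h).symm) _ _ (hP i) (hP j)
    exact hNI i j hij.ne x hxi hxj
  exact Equiv.ext fun i => hmono.apply_eq

end

/-- LGV corollary for `D`-compatible endpoints:
if every path `u_i → v_l` intersects every path `u_j → v_k` for `i < j`, `k < l`,
then `F₀(u, v) = det[h(u_i, v_j)]`. -/
theorem lindstrom_gessel_viennot_compatible {V R : Type*} [CommRing R]
    (E : V → V → Prop) (w : V → V → R)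
    (hacyclic : ∀ x : V, ∀ p : List V, IsPathFrom E x x p → p.length ≤ 1)
    (hfin : ∀ a b : V, {p : List V | IsPathFrom E a b p}.Finite)
    (n : ℕ) (u v : Fin n → V)
    (hcompat : ∀ i j k l : Fin n, i < j → k < l →
      ∀ p q : List V, IsPathFrom E (u i) (v l) p → IsPathFrom E (u j) (v k) q →
        ∃ x, x ∈ p ∧ x ∈ q) :
    nonIntGF E w n u v =
      Matrix.det (Matrix.of fun i j : Fin n => pathGF E w (u i) (v j)) := by
  rw [lindstrom_gessel_viennot w hacyclic hfin, Finset.sum_eq_single 1]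
  · simp
  · intro σ _ hσ
    have : IsEmpty {P : Fin n → List V //
        (∀ i, IsPathFrom E (u i) ((v ∘ σ) i) (P i)) ∧ NonIntersecting P} :=
      ⟨fun P => hσ (eq_one_of_nonIntersecting hcompat P.2.1 P.2.2)⟩
    rw [nonIntGF, finsum_of_isEmpty, smul_zero]
  · simp
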